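/- If N : I^n → I is a Jensen concave n-variable mean and M : I^n → I is a cyclically symmetric mean with M ≤ N pointwise, then M(x) ≤ (x₁+⋯+xₙ)/n for all x ∈ I^n. -/

import Mathlib

/-!
Cyclic symmetry gives `M x ≤ N (x ∘ σ^t)` for every rotation `σ^t`. Averaging these bounds over
`2^k` consecutive rotations and applying dyadic Jensen, `M x` is at most `N` of the averaged
vector, hence at most one of its coordinates. Each coordinate is a Cesàro mean of a sequence of
period `n`, so it differs from the arithmetic mean of `x` by `O(2^{-k})`; let `k → ∞`.
-/

open Finset Function Filter Topology
open Fin.NatCast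

def JensenConcaveOn {E : Type*} [AddCommGroup E] [Module ℝ E] (D : Set E) (N : E → ℝ) : Prop :=
  ∀ x ∈ D, ∀ y ∈ D, (N x + N y) / 2 ≤ N ((2 : ℝ)⁻¹ • (x + y))

lemma Finset.sum_range_two_pow_succ {M : Type*} [AddCommMonoid M] (g : ℕ → M) (k : ℕ) :
    ∑ t ∈ range (2 ^ (k + 1)), g t =
      ∑ t ∈ range (2 ^ k), g t + ∑ t ∈ range (2 ^ k), g (2 ^ k + t) := by
  rw [pow_succ, mul_two, sum_range_add]

section Dyadic

variable {E : Type*} [AddCommGroup E] [Module ℝ E] {D : Set E}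

lemma Convex.inv_pow_two_smul_sum_range_mem (hD : Convex ℝ D) {f : ℕ → E} (hf : ∀ t, f t ∈ D)
    (k : ℕ) : ((2 : ℝ) ^ k)⁻¹ • ∑ t ∈ range (2 ^ k), f t ∈ D := by
  rw [smul_sum]
  refine hD.sum_mem (fun _ _ => by positivity) ?_ fun t _ => hf t
  simp

lemma JensenConcaveOn.sum_range_two_pow_div_le {N : E → ℝ} (hN : JensenConcaveOn D N)
    (hD : Convex ℝ D) (k : ℕ) {f : ℕ → E} (hf : ∀ t, f t ∈ D) :
    (∑ t ∈ range (2 ^ k), N (f t)) / 2 ^ k ≤ N (((2 : ℝ) ^ k)⁻¹ • ∑ t ∈ range (2 ^ k), f t) := by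
  induction k generalizing f with
  | zero => simp
  | succ k ih =>
    have hf' : ∀ t, f (2 ^ k + t) ∈ D := fun t => hf _
    calc (∑ t ∈ range (2 ^ (k + 1)), N (f t)) / 2 ^ (k + 1)
        = ((∑ t ∈ range (2 ^ k), N (f t)) / 2 ^ k
            + (∑ t ∈ range (2 ^ k), N (f (2 ^ k + t))) / 2 ^ k) / 2 := by
          rw [sum_range_two_pow_succ]; ring
      _ ≤ (N (((2 : ℝ) ^ k)⁻¹ • ∑ t ∈ range (2 ^ k), f t)
            + N (((2 : ℝ) ^ k)⁻¹ • ∑ t ∈ range (2 ^ k), f (2 ^ k + t))) / 2 := by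
          gcongr
          exacts [ih hf, ih hf']
      _ ≤ N ((2 : ℝ)⁻¹ • (((2 : ℝ) ^ k)⁻¹ • ∑ t ∈ range (2 ^ k), f t
            + ((2 : ℝ) ^ k)⁻¹ • ∑ t ∈ range (2 ^ k), f (2 ^ k + t))) :=
          hN _ (hD.inv_pow_two_smul_sum_range_mem hf k) _
            (hD.inv_pow_two_smul_sum_range_mem hf' k)
      _ = N (((2 : ℝ) ^ (k + 1))⁻¹ • ∑ t ∈ range (2 ^ (k + 1)), f t) := by
          rw [sum_range_two_pow_succ]
          congr 1
          module

end Dyadic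

lemma Function.Periodic.sum_range_mul_add {M : Type*} [AddCommMonoid M] {g : ℕ → M} {n : ℕ}
    (hg : Periodic g n) (q r : ℕ) :
    ∑ t ∈ range (n * q + r), g t = q • ∑ t ∈ range n, g t + ∑ t ∈ range r, g t := by
  have hshift : ∀ q t, g (n * q + t) = g t := fun q t => by
    simpa [add_comm, mul_comm] using hg.nat_mul q t
  have hblocks : ∑ t ∈ range (n * q), g t = q • ∑ t ∈ range n, g t := by
    induction q with
    | zero => simp
    | succ q ih => simp only [mul_add_one, sum_range_add, ih, hshift, succ_nsmul]
  simp only [sum_range_add, hblocks, hshift]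

lemma Function.Periodic.sum_range_div_le {g : ℕ → ℝ} {n : ℕ} (hg : Periodic g n) (hn : 0 < n)
    {C : ℝ} (hC : ∀ t, |g t| ≤ C) {K : ℕ} (hK : 0 < K) :
    (∑ t ∈ range K, g t) / K ≤ (∑ t ∈ range n, g t) / n + 2 * n * C / K := by
  obtain ⟨q, r, hr, rfl⟩ : ∃ q r, r < n ∧ K = n * q + r :=
    ⟨K / n, K % n, Nat.mod_lt _ hn, (Nat.div_add_mod K n).symm⟩
  set B := ∑ t ∈ range n, g t
  have hC0 : 0 ≤ C := (abs_nonneg _).trans (hC 0)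
  have hn' : (0 : ℝ) < n := by exact_mod_cast hn
  have hbound : ∀ m, |∑ t ∈ range m, g t| ≤ m * C := fun m => by
    simpa using (abs_sum_le_sum_abs _ _).trans (sum_le_sum fun t (_ : t ∈ range m) => hC t)
  have hrB : -(r * C) ≤ r * B / n := by
    rw [le_div_iff₀ hn']
    nlinarith [neg_abs_le B, hbound n, (Nat.cast_nonneg r : (0 : ℝ) ≤ r)]
  have hrn : (r : ℝ) * C ≤ n * C := by gcongr
  have hsplit : ((n * q + r : ℕ) : ℝ) * B / n = q * B + r * B / n := by
    push_cast; field_simp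
  have key : q * B + ∑ t ∈ range r, g t ≤ ((n * q + r : ℕ) : ℝ) * B / n + 2 * n * C := by
    linarith [le_abs_self (∑ t ∈ range r, g t), hbound r]
  calc (∑ t ∈ range (n * q + r), g t) / ((n * q + r : ℕ) : ℝ)
      = (q * B + ∑ t ∈ range r, g t) / ((n * q + r : ℕ) : ℝ) := by
        rw [hg.sum_range_mul_add, nsmul_eq_mul]
    _ ≤ (((n * q + r : ℕ) : ℝ) * B / n + 2 * n * C) / ((n * q + r : ℕ) : ℝ) := by gcongr
    _ = B / n + 2 * n * C / ((n * q + r : ℕ) : ℝ) := by field_simp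

lemma apply_rotate_eq_of_comp_finRotate {α β : Type*} {n : ℕ} [NeZero n] {I : Set α}
    {M : (Fin n → α) → β} (hM : ∀ x : Fin n → α, (∀ i, x i ∈ I) → M (x ∘ finRotate n) = M x)
    {x : Fin n → α} (hx : ∀ i, x i ∈ I) (t : ℕ) : M (fun i => x (i + t)) = M x := by
  induction t with
  | zero => simp
  | succ t ih =>
    have hcomp : (fun i => x (i + ↑(t + 1))) = (fun i => x (i + t)) ∘ finRotate n := by
      funext i
      simp [finRotate_apply, add_right_comm, add_assoc]
    rw [hcomp, hM _ fun i => hx _, ih]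

lemma Fin.sum_range_add_natCast_div_le {n : ℕ} [NeZero n] (x : Fin n → ℝ) (i : Fin n) {K : ℕ}
    (hK : 0 < K) :
    (∑ t ∈ range K, x (i + t)) / K ≤ (∑ j, x j) / n + 2 * n * (∑ j, |x j|) / K := by
  have hper : Periodic (fun t : ℕ => x (i + t)) n := fun t => by simp
  have hcycle : ∑ t ∈ range n, x (i + t) = ∑ j, x j := by
    rw [← Fin.sum_univ_eq_sum_range (fun t => x (i + t))]
    simpa using Equiv.sum_comp (Equiv.addLeft i) x
  rw [← hcycle]
  exact hper.sum_range_div_le (Nat.pos_of_neZero n)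
    (fun t => single_le_sum (fun j _ => abs_nonneg (x j)) (mem_univ _)) hK

lemma le_of_forall_le_add_div_two_pow {a b c : ℝ} (h : ∀ k : ℕ, a ≤ b + c / 2 ^ k) : a ≤ b := by
  have hlim : Tendsto (fun k : ℕ => b + c / 2 ^ k) atTop (𝓝 b) := by
    simpa using (tendsto_const_nhds (x := b)).add
      ((tendsto_const_nhds (x := c)).div_atTop
        (tendsto_pow_atTop_atTop_of_one_lt one_lt_two))
  exact ge_of_tendsto' hlim h

theorem stmt_1_general (I : Set ℝ) (hI : Convex ℝ I) (n : ℕ) (hn : 0 < n)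
    (M N : (Fin n → ℝ) → ℝ)
    (hNmean : ∀ x : Fin n → ℝ, (∀ i, x i ∈ I) →
      (∃ i, x i ≤ N x) ∧ (∃ i, N x ≤ x i))
    (hMcyc : ∀ x : Fin n → ℝ, (∀ i, x i ∈ I) → M (x ∘ finRotate n) = M x)
    (hNconc : ∀ x y : Fin n → ℝ, (∀ i, x i ∈ I) → (∀ i, y i ∈ I) →
      (N x + N y) / 2 ≤ N (fun i => (x i + y i) / 2))
    (hMN : ∀ x : Fin n → ℝ, (∀ i, x i ∈ I) → M x ≤ N x) :
    ∀ x : Fin n → ℝ, (∀ i, x i ∈ I) → M x ≤ (∑ i, x i) / n := by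
  intro x hx
  have : NeZero n := ⟨hn.ne'⟩
  set D : Set (Fin n → ℝ) := {y | ∀ i, y i ∈ I}
  have hD : Convex ℝ D := by
    simpa [D, Set.pi] using convex_pi (s := Set.univ) fun _ _ => hI
  have hJ : JensenConcaveOn D N := fun y hy z hz => by
    convert hNconc y z hy hz using 2
    funext i
    simp only [Pi.smul_apply, Pi.add_apply, smul_eq_mul]
    ring
  set f : ℕ → Fin n → ℝ := fun t i => x (i + t)
  have hf : ∀ t, f t ∈ D := fun t i => hx _
  refine le_of_forall_le_add_div_two_pow (c := 2 * n * ∑ j, |x j|) fun k => ?_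
  obtain ⟨i, hi⟩ := (hNmean _ (hD.inv_pow_two_smul_sum_range_mem hf k)).2
  calc M x ≤ (∑ t ∈ range (2 ^ k), N (f t)) / 2 ^ k := by
        rw [le_div_iff₀ (by positivity)]
        simpa [mul_comm] using card_nsmul_le_sum (range (2 ^ k)) _ _ fun t _ =>
          (apply_rotate_eq_of_comp_finRotate hMcyc hx t).symm.trans_le (hMN _ (hf t))
    _ ≤ N (((2 : ℝ) ^ k)⁻¹ • ∑ t ∈ range (2 ^ k), f t) :=
        hJ.sum_range_two_pow_div_le hD k hf
    _ ≤ (∑ t ∈ range (2 ^ k), x (i + t)) / (2 ^ k : ℕ) := by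
        simpa [f, Finset.sum_apply, div_eq_inv_mul] using hi
    _ ≤ (∑ j, x j) / n + 2 * n * (∑ j, |x j|) / 2 ^ k := by
        simpa using Fin.sum_range_add_natCast_div_le x i (K := 2 ^ k) (by positivity)

theorem stmt_1 (I : Set ℝ) (hI : Convex ℝ I) (n : ℕ) (hn : 0 < n)
    (M N : (Fin n → ℝ) → ℝ)
    (hMmean : ∀ x : Fin n → ℝ, (∀ i, x i ∈ I) →
      (∃ i, x i ≤ M x) ∧ (∃ i, M x ≤ x i))
    (hNmean : ∀ x : Fin n → ℝ, (∀ i, x i ∈ I) →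
      (∃ i, x i ≤ N x) ∧ (∃ i, N x ≤ x i))
    (hNI : ∀ x : Fin n → ℝ, (∀ i, x i ∈ I) → N x ∈ I)
    (hMcyc : ∀ x : Fin n → ℝ, (∀ i, x i ∈ I) → M (x ∘ finRotate n) = M x)
    (hNconc : ∀ x y : Fin n → ℝ, (∀ i, x i ∈ I) → (∀ i, y i ∈ I) →
      (N x + N y) / 2 ≤ N (fun i => (x i + y i) / 2))
    (hMN : ∀ x : Fin n → ℝ, (∀ i, x i ∈ I) → M x ≤ N x) :
    ∀ x : Fin n → ℝ, (∀ i, x i ∈ I) → M x ≤ (∑ i, x i) / n :=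
  stmt_1_general I hI n hn M N hNmean hMcyc hNconc hMN
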